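/- arXiv:1802.07951 — 6 statements merged into one kernel-verified Lean document; each statement's English description precedes it below -/
import Mathlib

section
/- Let L be a finite-dimensional Lie algebra and let ξ ∈ L* be any linear functional. Then the stabilizer L(ξ) = {x ∈ L : ξ([x,y]) = 0 for all y ∈ L} is a Lie subalgebra of L; moreover if ξ is regular (i.e. dim L(ξ) = i(L)), then L(ξ) is abelian. -/
open Module

/-- The stabilizer `L(ξ) = {x ∈ L | ξ ⁅x, y⁆ = 0 for all y}` of a linear functional. -/
def lieStab (k : Type*) [Field k] (L : Type*) [LieRing L] [LieAlgebra k L]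
    (ξ : Module.Dual k L) : Submodule k L where
  carrier := {x | ∀ y, ξ ⁅x, y⁆ = 0}
  add_mem' := by intro a b ha hb y; rw [add_lie, map_add, ha y, hb y, add_zero]
  zero_mem' := by intro y; rw [zero_lie, map_zero]
  smul_mem' := by intro c a ha y; rw [smul_lie, map_smul, ha y, smul_zero]

/-- The index `i(L)`: the minimal dimension of a stabilizer `L(ξ)`, `ξ ∈ L*`. -/
noncomputable def lieIndex (k : Type*) [Field k] (L : Type*) [LieRing L] [LieAlgebra k L] : ℕ :=
  sInf (Set.range fun ξ : Module.Dual k L => finrank k (lieStab k L ξ))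

/-- The maximal abelian dimension `α(L)`. -/
noncomputable def maxAbelianDim (k : Type*) [Field k] (L : Type*) [LieRing L]
    [LieAlgebra k L] : ℕ :=
  sSup {d : ℕ | ∃ H : LieSubalgebra k L, IsLieAbelian H ∧ finrank k H = d}

/-- The magic number `c(L) = (dim L + i(L))/2`. -/
noncomputable def magic (k : Type*) [Field k] (L : Type*) [LieRing L] [LieAlgebra k L] : ℕ :=
  (finrank k L + lieIndex k L) / 2

/-!
Part one is the Jacobi identity. For part two, write `φ_ξ : L → L*`, `x ↦ ξ ∘ ad x`, whose
kernel is `L(ξ)`; regularity of `ξ` says that `φ_ξ` has maximal rank among all `φ_ξ + t φ_η`.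
Rank can only go up under small perturbations: if `φ_ξ x = 0` but `φ_η x ∉ range φ_ξ`, then
`(w, c) ↦ w + c • φ_η x` is injective on `range φ_ξ × k`; perturbed by `t • φ_η ∘ s`, with `s` a
linear section of `φ_ξ`, it stays injective for all but finitely many `t` (the exceptions are
inverse eigenvalues), and its image lies in `range (φ_ξ + t φ_η)`, which is then too big.
Hence `η ⁅x, ·⁆ = ξ ⁅z, ·⁆` for some `z`, and for `y ∈ L(ξ)` this gives
`η ⁅x, y⁆ = -ξ ⁅y, z⁆ = 0` for every `η`.
-/

open Function

namespace LinearMap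

variable {k U V W : Type*} [Field k] [AddCommGroup U] [Module k U] [AddCommGroup V] [Module k V]
  [AddCommGroup W] [Module k W]

theorem finite_setOf_not_injective_add_smul [FiniteDimensional k U] {f : U →ₗ[k] W}
    (hf : Injective f) (g : U →ₗ[k] W) : {t : k | ¬Injective (f + t • g)}.Finite := by
  obtain ⟨π, hπ⟩ := f.exists_leftInverse_of_injective (ker_eq_bot.mpr hf)
  refine ((End.finite_hasEigenvalue (π ∘ₗ g)).preimage
    (neg_injective.comp inv_injective).injOn).subset fun t ht => ?_
  obtain ⟨x, hx, hx0⟩ : ∃ x, (f + t • g) x = 0 ∧ x ≠ 0 := by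
    simpa [injective_iff_map_eq_zero, not_forall] using ht
  have hπx : x + t • π (g x) = 0 := by
    simpa [← comp_apply π f, hπ] using congr(π $hx)
  have ht0 : t ≠ 0 := by rintro rfl; exact hx0 (by simpa using hπx)
  refine End.hasEigenvalue_of_hasEigenvector ⟨End.mem_eigenspace_iff.mpr ?_, hx0⟩
  calc π (g x) = t⁻¹ • t • π (g x) := (inv_smul_smul₀ ht0 _).symm
    _ = (-t⁻¹) • x := by rw [eq_neg_of_add_eq_zero_right hπx, smul_neg, neg_smul]

theorem apply_mem_range_of_finrank_range_add_smul_le [Infinite k] [FiniteDimensional k W]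
    {A B : V →ₗ[k] W} (h : ∀ t : k, finrank k (range (A + t • B)) ≤ finrank k (range A))
    {a : V} (ha : A a = 0) : B a ∈ range A := by
  by_contra hBa
  obtain ⟨s, hs⟩ := A.rangeRestrict.exists_rightInverse_of_surjective A.range_rangeRestrict
  have hAs (w : range A) : A (s w) = w := congr(Subtype.val ($hs w))
  let f : k → (range A × k) →ₗ[k] W := fun t =>
    ((A + t • B) ∘ₗ s).coprod (toSpanSingleton k W (B a))
  have hf (t : k) : f t = f 0 + t • (B ∘ₗ s).coprod 0 := by
    ext ⟨w, c⟩ <;> simp [f]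
  have hf0 : Injective (f 0) := by
    refine (injective_iff_map_eq_zero _).mpr fun ⟨w, c⟩ hwc => ?_
    simp only [f, zero_smul, add_zero, coprod_apply, comp_apply, hAs, toSpanSingleton_apply] at hwc
    obtain rfl : c = 0 := by
      by_contra hc
      refine hBa ⟨-c⁻¹ • s w, ?_⟩
      rw [map_smul, hAs, eq_neg_of_add_eq_zero_left hwc, neg_smul, smul_neg, neg_neg,
        inv_smul_smul₀ hc]
    simpa using hwc
  obtain ⟨t, ht0, ht⟩ : ∃ t : k, t ≠ 0 ∧ Injective (f t) := by
    obtain ⟨t, ht⟩ := ((finite_setOf_not_injective_add_smul hf0 ((B ∘ₗ s).coprod 0)).insert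
      0).exists_notMem
    simp only [Set.mem_insert_iff, Set.mem_ofPred_eq, not_or, not_not] at ht
    exact ⟨t, ht.1, hf t ▸ ht.2⟩
  have hrange : range (f t) ≤ range (A + t • B) := by
    rintro _ ⟨⟨w, c⟩, rfl⟩
    refine ⟨s w + (t⁻¹ * c) • a, ?_⟩
    simp [f, ha, smul_smul, ht0, add_assoc]
  have := Submodule.finrank_mono hrange
  rw [finrank_range_of_inj ht, finrank_prod, finrank_self] at this
  exact absurd (h t) (by omega)

end LinearMap

section Coadjoint

variable (k : Type*) [Field k] (L : Type*) [LieRing L] [LieAlgebra k L]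

def coadjointPairing : Dual k L →ₗ[k] L →ₗ[k] Dual k L :=
  (LinearMap.llcomp k L L k).compl₂ (LieAlgebra.ad k L : L →ₗ[k] Module.End k L)

variable {k L}

@[simp]
lemma coadjointPairing_apply (ξ : Dual k L) (x y : L) : coadjointPairing k L ξ x y = ξ ⁅x, y⁆ :=
  rfl

lemma ker_coadjointPairing (ξ : Dual k L) :
    LinearMap.ker (coadjointPairing k L ξ) = lieStab k L ξ := by
  ext x
  simp only [LinearMap.mem_ker, LinearMap.ext_iff, coadjointPairing_apply, LinearMap.zero_apply]
  rfl

lemma lie_mem_lieStab {ξ : Dual k L} {x y : L} (hx : x ∈ lieStab k L ξ) (hy : y ∈ lieStab k L ξ) :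
    ⁅x, y⁆ ∈ lieStab k L ξ := fun z => by
  rw [lie_lie, map_sub, hx, hy, sub_zero]

lemma finrank_range_coadjointPairing_le_of_regular [Module.Finite k L] {ξ : Dual k L}
    (hξ : finrank k (lieStab k L ξ) = lieIndex k L) (η : Dual k L) :
    finrank k (LinearMap.range (coadjointPairing k L η)) ≤
      finrank k (LinearMap.range (coadjointPairing k L ξ)) := by
  have hη := LinearMap.finrank_range_add_finrank_ker (coadjointPairing k L η)
  have hξ' := LinearMap.finrank_range_add_finrank_ker (coadjointPairing k L ξ)
  have : lieIndex k L ≤ finrank k (lieStab k L η) := Nat.sInf_le ⟨η, rfl⟩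
  rw [ker_coadjointPairing] at hη hξ'
  omega

lemma lie_eq_zero_of_regular [Infinite k] [Module.Finite k L] {ξ : Dual k L}
    (hξ : finrank k (lieStab k L ξ) = lieIndex k L) {x y : L} (hx : x ∈ lieStab k L ξ)
    (hy : y ∈ lieStab k L ξ) : ⁅x, y⁆ = 0 := by
  refine (Module.forall_dual_apply_eq_zero_iff k _).mp fun η => ?_
  obtain ⟨z, hz⟩ : coadjointPairing k L η x ∈ LinearMap.range (coadjointPairing k L ξ) := by
    refine LinearMap.apply_mem_range_of_finrank_range_add_smul_le (fun t => ?_) ?_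
    · rw [← map_smul, ← map_add]
      exact finrank_range_coadjointPairing_le_of_regular hξ (ξ + t • η)
    · rwa [← LinearMap.mem_ker, ker_coadjointPairing]
  rw [← coadjointPairing_apply, ← hz, coadjointPairing_apply, ← lie_skew, map_neg, hy, neg_zero]

end Coadjoint

theorem stab_isSubalgebra_and_abelian_of_regular (k : Type*) [Field k] [CharZero k]
    (L : Type*) [LieRing L] [LieAlgebra k L] [Module.Finite k L]
    (ξ : Module.Dual k L) :
    (∀ x ∈ lieStab k L ξ, ∀ y ∈ lieStab k L ξ, ⁅x, y⁆ ∈ lieStab k L ξ) ∧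
    (finrank k (lieStab k L ξ) = lieIndex k L →
      ∀ x ∈ lieStab k L ξ, ∀ y ∈ lieStab k L ξ, ⁅x, y⁆ = 0) :=
  ⟨fun _ hx _ hy => lie_mem_lieStab hx hy, fun hξ _ hx _ hy => lie_eq_zero_of_regular hξ hx hy⟩
end

section
/- Let H be a Lie subalgebra of L of codimension one. If H admits a commutative polarization (an abelian subalgebra Q with dim Q = c(H)), then L satisfies Rentschler's property: α(L) ≥ c(L) − 1. -/
open Module

/-!
Restricting a functional `ξ` on `L` to a subalgebra `H` cuts its stabilizer down by at most
the codimension of `H`, because `L(ξ) ∩ H ⊆ H(ξ|_H)`. Every functional on `H` extends to `L`,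
so `i(L) ≤ i(H) + codim H`, whence `c(L) ≤ c(H) + codim H`; for codimension one this gives
`c(L) - 1 ≤ c(H)`. A commutative polarization of `H` is an abelian subalgebra of `L` of
dimension `c(H)`, so `α(L) ≥ c(H) ≥ c(L) - 1`.
-/

section Stabilizer

variable {k : Type*} [Field k] {L : Type*} [LieRing L] [LieAlgebra k L]

lemma lieStab_inf_le_map_lieStab_restrict (H : LieSubalgebra k L) (ξ : Module.Dual k L) :
    lieStab k L ξ ⊓ H.toSubmodule ≤
      (lieStab k H (ξ ∘ₗ H.toSubmodule.subtype)).map H.toSubmodule.subtype := by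
  rintro x ⟨hxξ, hxH⟩
  exact ⟨⟨x, hxH⟩, fun y => hxξ y, rfl⟩

variable [Module.Finite k L]

lemma finrank_lieStab_add_finrank_le (H : LieSubalgebra k L) (ξ : Module.Dual k L) :
    finrank k (lieStab k L ξ) + finrank k H ≤
      finrank k (lieStab k H (ξ ∘ₗ H.toSubmodule.subtype)) + finrank k L := by
  have hinf : finrank k ↥(lieStab k L ξ ⊓ H.toSubmodule) ≤
      finrank k (lieStab k H (ξ ∘ₗ H.toSubmodule.subtype)) :=
    (Submodule.finrank_mono (lieStab_inf_le_map_lieStab_restrict H ξ)).trans_eq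
      (Submodule.finrank_map_subtype_eq _ _)
  have hsup := Submodule.finrank_le (lieStab k L ξ ⊔ H.toSubmodule)
  have hdim := Submodule.finrank_sup_add_finrank_inf_eq (lieStab k L ξ) H.toSubmodule
  change _ + finrank k H.toSubmodule ≤ _
  omega

lemma lieIndex_add_finrank_le (H : LieSubalgebra k L) :
    lieIndex k L + finrank k H ≤ lieIndex k H + finrank k L := by
  obtain ⟨ξ', hξ'⟩ := Nat.sInf_mem (Set.range_nonempty
    fun ξ : Module.Dual k H => finrank k (lieStab k H ξ))
  obtain ⟨ξ, rfl⟩ := LinearMap.exists_extend (p := H.toSubmodule) ξ'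
  have hL : lieIndex k L ≤ finrank k (lieStab k L ξ) := Nat.sInf_le ⟨ξ, rfl⟩
  have hH : finrank k (lieStab k H (ξ ∘ₗ H.toSubmodule.subtype)) = lieIndex k H := hξ'
  have := finrank_lieStab_add_finrank_le H ξ
  omega

lemma magic_add_finrank_le (H : LieSubalgebra k L) :
    magic k L + finrank k H ≤ magic k H + finrank k L := by
  have := lieIndex_add_finrank_le H
  unfold magic
  omega

end Stabilizer

lemma finrank_le_maxAbelianDim {k : Type*} [Field k] {L : Type*} [LieRing L] [LieAlgebra k L]
    [Module.Finite k L] (A : LieSubalgebra k L) [IsLieAbelian A] :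
    finrank k A ≤ maxAbelianDim k L :=
  le_csSup ⟨finrank k L, by rintro _ ⟨B, -, rfl⟩; exact Submodule.finrank_le B.toSubmodule⟩
    ⟨A, inferInstance, rfl⟩

theorem rentschler_of_subalgebra_CP_general (k : Type*) [Field k]
    (L : Type*) [LieRing L] [LieAlgebra k L] [Module.Finite k L]
    (H : LieSubalgebra k L) (hcodim : finrank k H + 1 = finrank k L)
    (hCP : ∃ Q : LieSubalgebra k H, IsLieAbelian Q ∧ finrank k Q = magic k H) :
    magic k L - 1 ≤ maxAbelianDim k L := by
  obtain ⟨Q, hQab, hQdim⟩ := hCP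
  let e := Q.equivMapOfInjective H.incl Subtype.val_injective
  have : IsLieAbelian (Q.map H.incl) := e.surjective.isLieAbelian hQab
  have hα := finrank_le_maxAbelianDim (Q.map H.incl)
  rw [← e.toLinearEquiv.finrank_eq, hQdim] at hα
  have := magic_add_finrank_le H
  omega

/-- if a codimension-one subalgebra H of L admits a CP, then L satisfies
Rentschler's property. -/
theorem rentschler_of_subalgebra_CP (k : Type*) [Field k] [CharZero k]
    (L : Type*) [LieRing L] [LieAlgebra k L] [Module.Finite k L]
    (H : LieSubalgebra k L) (hcodim : finrank k H + 1 = finrank k L)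
    (hCP : ∃ Q : LieSubalgebra k H, IsLieAbelian Q ∧ finrank k Q = magic k H) :
    magic k L - 1 ≤ maxAbelianDim k L :=
  rentschler_of_subalgebra_CP_general k L H hcodim hCP
end

section
/- With notation as above, given that i(N_n) = ⌊n/2⌋, the abelian ideal P = span{E_{ij} : 1 ≤ i ≤ q, q+1 ≤ j ≤ n} (q = ⌊n/2⌋) satisfies dim P = c(N_n) = (dim N_n + i(N_n))/2, i.e. P is a commutative polarization of N_n, and hence α(N_n) = ⌊n²/4⌋. -/
open Module

attribute [local instance 100] LieRing.ofAssociativeRing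

/-- The Lie algebra `N_n` of strictly upper triangular `n × n` matrices, as a Lie
subalgebra of the matrix Lie algebra (with commutator bracket). -/
def strictUpper (k : Type*) [Field k] (n : ℕ) : LieSubalgebra k (Matrix (Fin n) (Fin n) k) where
  carrier := {M | ∀ i j : Fin n, j ≤ i → M i j = 0}
  add_mem' := by intro A B hA hB i j hij; simp [Matrix.add_apply, hA i j hij, hB i j hij]
  zero_mem' := by intro i j _; simp
  smul_mem' := by intro c A hA i j hij; simp [Matrix.smul_apply, hA i j hij]
  lie_mem' := by
    intro A B hA hB i j hij
    have h : ∀ (C D : Matrix (Fin n) (Fin n) k),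
        (∀ i j : Fin n, j ≤ i → C i j = 0) → (∀ i j : Fin n, j ≤ i → D i j = 0) →
        (C * D) i j = 0 := by
      intro C D hC hD
      rw [Matrix.mul_apply]
      refine Finset.sum_eq_zero fun l _ => ?_
      rcases le_or_gt l i with h' | h'
      · rw [hC i l h', zero_mul]
      · rw [hD l j (hij.trans h'.le), mul_zero]
    have : (⁅A, B⁆ : Matrix (Fin n) (Fin n) k) = A * B - B * A := rfl
    rw [this, Matrix.sub_apply, h A B hA hB, h B A hB hA, sub_zero]

/-!
For `ξ ∈ L*`, the alternating form `(x, y) ↦ ξ ⁅x, y⁆` has radical `L(ξ)`, and an abelian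
subalgebra `A` is isotropic for it. Hence `x ↦ ξ ⁅x, ·⁆` maps `A` into the annihilator of `A`
with kernel `A ∩ L(ξ)`, which gives `2 dim A ≤ dim L + dim L(ξ)`; taking `ξ` with a stabilizer of
minimal dimension, `dim A ≤ c(L)`. In `N_n` the matrix units `E_ij` with `i < q ≤ j` have pairwise
vanishing products, so they span an abelian subalgebra of dimension `q (n - q)`, and counting
matrix units shows that this equals `c(N_n)` and `⌊n² / 4⌋`.
-/

section Polarization

variable {k L : Type*} [Field k] [LieRing L] [LieAlgebra k L]

open LieSubalgebra

def kirillovForm (ξ : Dual k L) : L →ₗ[k] Dual k L :=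
  (LieAlgebra.ad k L : L →ₗ[k] Module.End k L).compr₂ ξ

@[simp]
lemma kirillovForm_apply (ξ : Dual k L) (x y : L) : kirillovForm ξ x y = ξ ⁅x, y⁆ := rfl

lemma ker_kirillovForm (ξ : Dual k L) : LinearMap.ker (kirillovForm ξ) = lieStab k L ξ := by
  ext x
  simp only [LinearMap.mem_ker, LinearMap.ext_iff, kirillovForm_apply, LinearMap.zero_apply]
  rfl

lemma two_mul_finrank_le_of_isLieAbelian [FiniteDimensional k L] (ξ : Dual k L)
    (A : LieSubalgebra k L) (hA : IsLieAbelian A) :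
    2 * finrank k A ≤ finrank k L + finrank k (lieStab k L ξ) := by
  set φ := (kirillovForm ξ).domRestrict A.toSubmodule
  have hrange : LinearMap.range φ ≤ A.toSubmodule.dualAnnihilator := by
    rintro - ⟨a, rfl⟩
    rw [Submodule.mem_dualAnnihilator]
    intro b hb
    have : ⁅(⟨a, a.2⟩ : A), (⟨b, hb⟩ : A)⁆ = 0 := trivial_lie_zero _ _ _ _
    simp [φ, show ⁅(a : L), b⁆ = 0 from congrArg Subtype.val this]
  have hker : finrank k (LinearMap.ker φ) ≤ finrank k (lieStab k L ξ) := by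
    rw [← Submodule.finrank_map_subtype_eq, ← ker_kirillovForm, LinearMap.ker_domRestrict]
    exact Submodule.finrank_mono (Submodule.map_comap_le _ _)
  have hrank := Submodule.finrank_mono hrange
  have hnullity := LinearMap.finrank_range_add_finrank_ker φ
  have hann := Subspace.finrank_add_finrank_dualAnnihilator_eq A.toSubmodule
  change 2 * finrank k A.toSubmodule ≤ _
  omega

lemma exists_finrank_lieStab_eq_lieIndex :
    ∃ ξ : Dual k L, finrank k (lieStab k L ξ) = lieIndex k L :=
  Nat.sInf_mem (Set.range_nonempty _)

lemma finrank_le_magic_of_isLieAbelian [FiniteDimensional k L] (A : LieSubalgebra k L)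
    (hA : IsLieAbelian A) : finrank k A ≤ magic k L := by
  obtain ⟨ξ, hξ⟩ := exists_finrank_lieStab_eq_lieIndex (k := k) (L := L)
  have := two_mul_finrank_le_of_isLieAbelian ξ A hA
  rw [magic, Nat.le_div_iff_mul_le two_pos]
  omega

lemma maxAbelianDim_eq_magic [FiniteDimensional k L] (A : LieSubalgebra k L)
    (hA : IsLieAbelian A) (hmagic : finrank k A = magic k L) :
    maxAbelianDim k L = magic k L := by
  have hbound : magic k L ∈ upperBounds
      {d | ∃ H : LieSubalgebra k L, IsLieAbelian H ∧ finrank k H = d} := by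
    rintro - ⟨H, hH, rfl⟩
    exact finrank_le_magic_of_isLieAbelian H hH
  exact IsGreatest.csSup_eq ⟨⟨A, hA, hmagic⟩, hbound⟩

lemma LieSubalgebra.exists_isLieAbelian_finrank_eq_finrank_span {K : LieSubalgebra k L}
    {s : Set L} (hsK : s ⊆ K) (hs : ∀ x ∈ s, ∀ y ∈ s, ⁅x, y⁆ = 0) :
    ∃ Q : LieSubalgebra k K, IsLieAbelian Q ∧ finrank k Q = finrank k (Submodule.span k s) := by
  have hle : lieSpan k L s ≤ K := lieSpan_le.mpr hsK
  refine ⟨ofLe hle, ?_, ?_⟩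
  · exact (lie_abelian_iff_equiv_lie_abelian (equivOfLe hle)).mp (isLieAbelian_lieSpan_iff.mpr hs)
  · rw [← (equivOfLe hle).toLinearEquiv.finrank_eq, ← coe_lieSpan_eq_span_of_forall_lie_eq_zero hs]
    rfl

end Polarization

namespace Nat

lemma div_two_mul_sub_div_two (n : ℕ) : n / 2 * (n - n / 2) = n ^ 2 / 4 := by
  obtain ⟨m, rfl | rfl⟩ := Nat.even_or_odd' n
  · rw [show (2 * m) ^ 2 = 4 * (m * m) by ring, Nat.mul_div_cancel_left _ four_pos,
      show 2 * m / 2 = m by omega, show 2 * m - m = m by omega]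
  · rw [show (2 * m + 1) ^ 2 = 4 * (m * (m + 1)) + 1 by ring, Nat.mul_add_div four_pos,
      show (2 * m + 1) / 2 = m by omega, show 2 * m + 1 - m = m + 1 by omega]
    norm_num

lemma mul_pred_div_two_add_div_two_div_two (n : ℕ) :
    (n * (n - 1) / 2 + n / 2) / 2 = n / 2 * (n - n / 2) := by
  obtain ⟨m, rfl | rfl⟩ := Nat.even_or_odd' n
  · rcases m with _ | m
    · rfl
    rw [show 2 * (m + 1) - 1 = 2 * m + 1 by omega, show 2 * (m + 1) / 2 = m + 1 by omega,
      show 2 * (m + 1) - (m + 1) = m + 1 by omega,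
      show 2 * (m + 1) * (2 * m + 1) = 2 * ((m + 1) * (2 * m + 1)) by ring,
      Nat.mul_div_cancel_left _ two_pos,
      show (m + 1) * (2 * m + 1) + (m + 1) = 2 * ((m + 1) * (m + 1)) by ring,
      Nat.mul_div_cancel_left _ two_pos]
  · rw [show 2 * m + 1 - 1 = 2 * m by omega, show (2 * m + 1) / 2 = m by omega,
      show 2 * m + 1 - m = m + 1 by omega,
      show (2 * m + 1) * (2 * m) = 2 * ((2 * m + 1) * m) by ring,
      Nat.mul_div_cancel_left _ two_pos,
      show (2 * m + 1) * m + m = 2 * (m * (m + 1)) by ring,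
      Nat.mul_div_cancel_left _ two_pos]

end Nat

namespace Fin

lemma card_setOf_fst_lt_snd (n : ℕ) :
    Nat.card {p : Fin n × Fin n | p.1 < p.2} = n * (n - 1) / 2 := by
  classical
  rw [Nat.card_coe_set_eq, Set.ncard_eq_toFinset_card', Set.toFinset_ofPred, Finset.card_filter,
    Fintype.sum_prod_type_right]
  simp only [← Finset.card_filter, Fin.lt_def, Fin.card_filter_val_lt, Fin.is_le', min_eq_right]
  rw [Fin.sum_univ_eq_sum_range (fun j => j) n, Finset.sum_range_id]

lemma card_setOf_fst_lt_le_snd {n q : ℕ} (hq : q ≤ n) :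
    Nat.card {p : Fin n × Fin n | (p.1 : ℕ) < q ∧ q ≤ (p.2 : ℕ)} = q * (n - q) := by
  rw [Nat.card_coe_set_eq, Set.ncard_eq_toFinset_card', Set.toFinset_ofPred,
    ← Finset.univ_product_univ,
    Finset.filter_product (p := fun i : Fin n => (i : ℕ) < q) (q := fun j : Fin n => q ≤ (j : ℕ)),
    Finset.card_product]
  have hlt : (Finset.univ.filter fun i : Fin n => (i : ℕ) < q).card = q := by
    rw [Fin.card_filter_val_lt, min_eq_right hq]
  have hsplit := Finset.card_filter_add_card_filter_not (s := Finset.univ)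
    (fun i : Fin n => (i : ℕ) < q)
  simp only [not_lt, Finset.card_univ, Fintype.card_fin] at hsplit
  rw [hlt, show (Finset.univ.filter fun j : Fin n => q ≤ (j : ℕ)).card = n - q by omega]

end Fin

namespace Matrix

variable {k m n : Type*} [Fintype m] [Fintype n] [DecidableEq m] [DecidableEq n]

lemma coe_stdBasis [Semiring k] :
    ⇑(stdBasis k m n) = fun p : m × n => single p.1 p.2 (1 : k) :=
  funext fun p => stdBasis_eq_single k p.1 p.2

lemma mem_span_image_single_one_iff [Semiring k] (S : Set (m × n)) (M : Matrix m n k) :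
    M ∈ Submodule.span k ((fun p => single p.1 p.2 (1 : k)) '' S) ↔
      ∀ i j, (i, j) ∉ S → M i j = 0 := by
  rw [← coe_stdBasis, Basis.mem_span_image]
  simp only [Set.subset_def, Finset.mem_coe, Finsupp.mem_support_iff, Prod.forall]
  simp [stdBasis, not_imp_comm]

lemma finrank_span_image_single_one [CommRing k] [Nontrivial k] (S : Set (m × n)) :
    finrank k (Submodule.span k ((fun p => single p.1 p.2 (1 : k)) '' S)) = Nat.card S := by
  classical
  rw [← coe_stdBasis, Set.image_eq_range, Nat.card_eq_fintype_card]
  exact finrank_span_eq_card ((stdBasis k m n).linearIndependent.comp _ Subtype.val_injective)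

lemma lie_eq_zero_of_mem_image_single_one [Ring k] {S : Set (m × m)}
    (hS : ∀ p ∈ S, ∀ p' ∈ S, p.2 ≠ p'.1) :
    ∀ x ∈ (fun p => single p.1 p.2 (1 : k)) '' S, ∀ y ∈ (fun p => single p.1 p.2 (1 : k)) '' S,
      ⁅x, y⁆ = 0 := by
  rintro - ⟨p, hp, rfl⟩ - ⟨p', hp', rfl⟩
  rw [LieRing.of_associative_ring_bracket, sub_eq_zero]
  exact (single_mul_single_of_ne _ _ _ _ (hS p hp p' hp') _).trans
    (single_mul_single_of_ne _ _ _ _ (hS p' hp' p hp) _).symm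

end Matrix

section StrictUpper

variable (k : Type*) [Field k] (n : ℕ)

lemma toSubmodule_strictUpper :
    (strictUpper k n).toSubmodule =
      Submodule.span k
        ((fun p : Fin n × Fin n => Matrix.single p.1 p.2 (1 : k)) '' {p | p.1 < p.2}) := by
  ext M
  rw [Matrix.mem_span_image_single_one_iff]
  simp only [Set.mem_ofPred_eq, not_lt]
  rfl

lemma finrank_strictUpper : finrank k (strictUpper k n) = n * (n - 1) / 2 := by
  change finrank k (strictUpper k n).toSubmodule = _
  rw [toSubmodule_strictUpper, Matrix.finrank_span_image_single_one, Fin.card_setOf_fst_lt_snd]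

lemma image_single_one_subset_strictUpper {S : Set (Fin n × Fin n)} (hS : ∀ p ∈ S, p.1 < p.2) :
    (fun p => Matrix.single p.1 p.2 (1 : k)) '' S ⊆ strictUpper k n := by
  change _ ⊆ ((strictUpper k n).toSubmodule : Set (Matrix (Fin n) (Fin n) k))
  rw [toSubmodule_strictUpper]
  exact Submodule.subset_span.trans' (Set.image_mono hS)

end StrictUpper

theorem strictUpper_CP_general (k : Type*) [Field k] (n : ℕ) (q : ℕ)
    (hq : q = n / 2)
    (hindex : lieIndex k (strictUpper k n) = n / 2)
    (P : Submodule k (Matrix (Fin n) (Fin n) k))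
    (hP : P = Submodule.span k
      {M | ∃ i j : Fin n, (i : ℕ) < q ∧ q ≤ (j : ℕ) ∧ M = Matrix.single i j (1 : k)}) :
    finrank k P = magic k (strictUpper k n) ∧
    (∃ Q : LieSubalgebra k (strictUpper k n), IsLieAbelian Q ∧
      finrank k Q = magic k (strictUpper k n)) ∧
    maxAbelianDim k (strictUpper k n) = n ^ 2 / 4 := by
  set B := {p : Fin n × Fin n | (p.1 : ℕ) < q ∧ q ≤ (p.2 : ℕ)}
  have hPB : P = Submodule.span k ((fun p => Matrix.single p.1 p.2 (1 : k)) '' B) := by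
    rw [hP]
    congr 1
    ext M
    simp [B, eq_comm, and_assoc]
  have hmagic : magic k (strictUpper k n) = q * (n - q) := by
    rw [magic, finrank_strictUpper, hindex, Nat.mul_pred_div_two_add_div_two_div_two, hq]
  have hdimP : finrank k P = magic k (strictUpper k n) := by
    rw [hPB, Matrix.finrank_span_image_single_one, Fin.card_setOf_fst_lt_le_snd (by omega), hmagic]
  have hB_upper : ∀ p ∈ B, p.1 < p.2 := fun p hp => Fin.lt_def.mpr (hp.1.trans_le hp.2)
  have hB_disjoint : ∀ p ∈ B, ∀ p' ∈ B, p.2 ≠ p'.1 := fun p hp p' hp' h => by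
    have := congrArg Fin.val h
    simp only [B, Set.mem_ofPred_eq] at hp hp'
    omega
  obtain ⟨Q, hQ, hdimQ⟩ := LieSubalgebra.exists_isLieAbelian_finrank_eq_finrank_span
    (image_single_one_subset_strictUpper k n hB_upper)
    (Matrix.lie_eq_zero_of_mem_image_single_one hB_disjoint)
  rw [← hPB, hdimP] at hdimQ
  refine ⟨hdimP, ⟨Q, hQ, hdimQ⟩, ?_⟩
  rw [maxAbelianDim_eq_magic Q hQ hdimQ, hmagic, hq, Nat.div_two_mul_sub_div_two]

/-- given `i(N_n) = ⌊n/2⌋`, the abelian ideal `P` satisfies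
`dim P = c(N_n)`, i.e. `P` is a commutative polarization of `N_n`, and hence
`α(N_n) = ⌊n²/4⌋`. -/
theorem strictUpper_CP (k : Type*) [Field k] [CharZero k] (n : ℕ) (q : ℕ)
    (hq : q = n / 2)
    (hindex : lieIndex k (strictUpper k n) = n / 2)
    (P : Submodule k (Matrix (Fin n) (Fin n) k))
    (hP : P = Submodule.span k
      {M | ∃ i j : Fin n, (i : ℕ) < q ∧ q ≤ (j : ℕ) ∧ M = Matrix.single i j (1 : k)}) :
    finrank k P = magic k (strictUpper k n) ∧
    (∃ Q : LieSubalgebra k (strictUpper k n), IsLieAbelian Q ∧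
      finrank k Q = magic k (strictUpper k n)) ∧
    maxAbelianDim k (strictUpper k n) = n ^ 2 / 4 :=
  strictUpper_CP_general k n q hq hindex P hP
end

section
/- Let L be an n-dimensional filiform Lie algebra with minimal index: i(L) = 1 if n is odd, i(L) = 2 if n is even. Then L satisfies Rentschler's property α(L) ≥ c(L) − 1; moreover if n is odd (so i(L) = 1) then the q-dimensional abelian ideal H = C^{q−1}(L), q = (n+1)/2, is a commutative polarization (dim H = c(L)). -/
/-!
The terms of the filtration satisfy `⁅x i, x j⁆ ∈ span {x l | l > i + j}` and `x l = 0` for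
`l ≥ n`, so the basis vectors `x l` with `l ≥ n - q` commute pairwise: `2 (n - q) + 1 ≥ n`.
Their span `H` is therefore an abelian subalgebra of dimension `q = ⌈n / 2⌉`, whence
`α(L) ≥ q`. Minimal index gives `c(L) = ⌈n / 2⌉` for odd `n` and `c(L) = n / 2 + 1` for even
`n`, so `α(L) ≥ c(L) - 1` in both cases and `dim H = c(L)` when `n` is odd.
-/

open Module

open Submodule

section

variable {k L : Type*} [Field k] [LieRing L] [LieAlgebra k L]

theorem lie_eq_zero_of_mem_span {S : Set L} (hS : ∀ a ∈ S, ∀ c ∈ S, ⁅a, c⁆ = 0) {a c : L}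
    (ha : a ∈ span k S) (hc : c ∈ span k S) : ⁅a, c⁆ = 0 := by
  have hK := LieSubalgebra.coe_lieSpan_eq_span_of_forall_lie_eq_zero (R := k) hS
  have : IsLieAbelian (LieSubalgebra.lieSpan k L S) :=
    LieSubalgebra.isLieAbelian_lieSpan_iff.mpr hS
  rw [← hK] at ha hc
  exact congrArg Subtype.val (trivial_lie_zero _ _ (⟨a, ha⟩ : LieSubalgebra.lieSpan k L S) ⟨c, hc⟩)

theorem finrank_span_le_maxAbelianDim [Module.Finite k L] {S : Set L}
    (hS : ∀ a ∈ S, ∀ c ∈ S, ⁅a, c⁆ = 0) : finrank k (span k S) ≤ maxAbelianDim k L := by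
  have hbdd : BddAbove {d | ∃ K : LieSubalgebra k L, IsLieAbelian K ∧ finrank k K = d} :=
    ⟨finrank k L, by rintro d ⟨K, -, rfl⟩; exact K.toSubmodule.finrank_le⟩
  refine le_csSup hbdd ⟨LieSubalgebra.lieSpan k L S,
    LieSubalgebra.isLieAbelian_lieSpan_iff.mpr hS, ?_⟩
  rw [← LieSubalgebra.coe_lieSpan_eq_span_of_forall_lie_eq_zero hS]
  rfl

section Filtration

variable {n : ℕ} {x : ℕ → L}

theorem lie_eq_zero_of_two_mul_add_one_ge (hx0 : ∀ i, n ≤ i → x i = 0)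
    (hfil : ∀ i j, 1 ≤ i → 1 ≤ j →
      ⁅x i, x j⁆ ∈ span k {v | ∃ l, i + j + 1 ≤ l ∧ v = x l})
    {p l m : ℕ} (hnp : n ≤ 2 * p + 1) (hl : p ≤ l) (hm : p ≤ m) : ⁅x l, x m⁆ = 0 := by
  rcases Nat.eq_zero_or_pos l with rfl | hl1 <;> rcases Nat.eq_zero_or_pos m with rfl | hm1
  · exact lie_self _
  · rw [hx0 m (by omega), lie_zero]
  · rw [hx0 l (by omega), zero_lie]
  · have hspan : span k {v | ∃ t, l + m + 1 ≤ t ∧ v = x t} = ⊥ := by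
      rw [span_eq_bot]
      rintro v ⟨t, ht, rfl⟩
      exact hx0 t (by omega)
    have h := hfil l m hl1 hm1
    rwa [hspan, mem_bot] at h

theorem finrank_span_tail (b : Basis (Fin n) k L) (hx : ∀ i (h : i < n), x i = b ⟨i, h⟩)
    (hx0 : ∀ i, n ≤ i → x i = 0) (m : ℕ) :
    finrank k (span k {v | ∃ l, m ≤ l ∧ v = x l}) = n - m := by
  let e : Fin (n - m) → Fin n := fun i => ⟨m + i, by omega⟩
  have he : Function.Injective e := fun i j hij => Fin.ext (by simpa [e] using hij)
  have hspan : span k {v | ∃ l, m ≤ l ∧ v = x l} = span k (Set.range (b ∘ e)) := by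
    apply le_antisymm <;> rw [span_le]
    · rintro v ⟨l, hl, rfl⟩
      by_cases hln : l < n
      · refine subset_span ⟨⟨l - m, by omega⟩, ?_⟩
        simp only [Function.comp_apply, hx l hln, e]
        congr 2
        omega
      · rw [hx0 l (by omega)]
        exact zero_mem _
    · rintro v ⟨i, rfl⟩
      exact subset_span ⟨m + i, by omega, (hx _ _).symm⟩
  rw [hspan, finrank_span_eq_card (b.linearIndependent.comp e he), Fintype.card_fin]

end Filtration

end

theorem filiform_minimal_index_rentschler_general (k : Type*) [Field k]
    (L : Type*) [LieRing L] [LieAlgebra k L] [Module.Finite k L]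
    (n : ℕ) (b : Basis (Fin n) k L) (x : ℕ → L)
    (hx : ∀ i (h : i < n), x i = b ⟨i, h⟩) (hx0 : ∀ i, n ≤ i → x i = 0)
    (had2 : ∀ i j, 1 ≤ i → 1 ≤ j →
      ⁅x i, x j⁆ ∈ Submodule.span k {v | ∃ l, i + j + 1 ≤ l ∧ v = x l})
    (hiodd : Odd n → lieIndex k L = 1) (hieven : Even n → lieIndex k L = 2)
    (q : ℕ) (hq : q = (n + 1) / 2)
    (H : Submodule k L) (hH : H = Submodule.span k {v | ∃ l, n - q ≤ l ∧ v = x l}) :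
    magic k L - 1 ≤ maxAbelianDim k L ∧
    (Odd n → finrank k H = magic k L ∧ ∀ a ∈ H, ∀ c ∈ H, ⁅a, c⁆ = 0) := by
  have hgen : ∀ a ∈ {v | ∃ l, n - q ≤ l ∧ v = x l}, ∀ c ∈ {v | ∃ l, n - q ≤ l ∧ v = x l},
      ⁅a, c⁆ = 0 := by
    rintro _ ⟨l, hl, rfl⟩ _ ⟨m, hm, rfl⟩
    exact lie_eq_zero_of_two_mul_add_one_ge hx0 had2 (by omega) hl hm
  have hdimH : finrank k H = q := by
    rw [hH, finrank_span_tail b hx hx0]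
    omega
  have hα : q ≤ maxAbelianDim k L := hdimH ▸ hH ▸ finrank_span_le_maxAbelianDim hgen
  have hdimL : finrank k L = n := by simp [finrank_eq_card_basis b]
  rcases Nat.even_or_odd n with hn | hn
  · have : magic k L = (n + 2) / 2 := by rw [magic, hdimL, hieven hn]
    exact ⟨by omega, fun hodd => absurd hn (Nat.not_even_iff_odd.mpr hodd)⟩
  · have hmagic : magic k L = q := by rw [magic, hdimL, hiodd hn, hq]
    refine ⟨by omega, fun _ => ⟨hdimH.trans hmagic.symm, ?_⟩⟩
    rw [hH]
    exact fun a ha c hc => lie_eq_zero_of_mem_span hgen ha hc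

/-- a filiform Lie algebra of minimal index satisfies Rentschler's property,
and when `n` is odd (so `i(L) = 1`) the abelian ideal `H = C^{q-1}(L) = span(x_q,…,x_n)`
(0-indexed: span of the `x l` with `l ≥ n - q`, `q = (n+1)/2`) is a commutative polarization:
`dim H = c(L)`. -/
theorem filiform_minimal_index_rentschler (k : Type*) [Field k] [CharZero k]
    (L : Type*) [LieRing L] [LieAlgebra k L] [Module.Finite k L]
    (n : ℕ) (b : Basis (Fin n) k L) (x : ℕ → L)
    (hx : ∀ i (h : i < n), x i = b ⟨i, h⟩) (hx0 : ∀ i, n ≤ i → x i = 0)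
    (had1 : ∀ i, 1 ≤ i → i ≤ n - 2 → ⁅x 0, x i⁆ = x (i + 1))
    (had1' : ⁅x 0, x (n - 1)⁆ = 0)
    (had2 : ∀ i j, 1 ≤ i → 1 ≤ j →
      ⁅x i, x j⁆ ∈ Submodule.span k {v | ∃ l, i + j + 1 ≤ l ∧ v = x l})
    (hiodd : Odd n → lieIndex k L = 1) (hieven : Even n → lieIndex k L = 2)
    (q : ℕ) (hq : q = (n + 1) / 2)
    (H : Submodule k L) (hH : H = Submodule.span k {v | ∃ l, n - q ≤ l ∧ v = x l}) :
    magic k L - 1 ≤ maxAbelianDim k L ∧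
    (Odd n → finrank k H = magic k L ∧ ∀ a ∈ H, ∀ c ∈ H, ⁅a, c⁆ = 0) :=
  filiform_minimal_index_rentschler_general k L n b x hx hx0 had2 hiodd hieven q hq H hH
end

section
/- Let L be a 7-dimensional nilpotent Lie algebra over an algebraically closed field of characteristic zero with i(L) = 3 and dim Z(L) = 2. Then L possesses a 4-dimensional abelian subalgebra; that is, α(L) ≥ 4 = c(L) − 1. -/
open Module

open LieAlgebra

theorem LieSubmodule.lt_normalizer_of_ne_top {R L M : Type*} [CommRing R] [LieRing L]
    [LieAlgebra R L] [AddCommGroup M] [Module R M] [LieRingModule L M] [LieModule R L M]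
    [LieModule.IsNilpotent L M] {N : LieSubmodule R L M} (hN : N ≠ ⊤) : N < N.normalizer := by
  refine N.le_normalizer.lt_of_ne fun h ↦ hN (eq_top_iff.mpr ?_)
  obtain ⟨n, hn⟩ := (LieModule.isNilpotent_iff_exists_ucs_eq_top R (L := L) (M := M)).mp ‹_›
  exact hn ▸ ucs_le_of_normalizer_eq_self h.symm n

section

variable {k L : Type*} [Field k] [LieRing L] [LieAlgebra k L]

theorem finrank_le_finrank_center_add_finrank_ker_ad [Module.Finite k L] {v : L}
    (hv : v ∈ (center k L).normalizer) :
    finrank k L ≤ finrank k (center k L) + finrank k (LinearMap.ker (ad k L v)) := by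
  have hrange : LinearMap.range (ad k L v) ≤ (center k L).toSubmodule := by
    rintro _ ⟨x, rfl⟩
    rw [ad_apply, ← lie_skew]
    exact neg_mem ((LieSubmodule.mem_normalizer _ v).mp hv x)
  have := Submodule.finrank_mono hrange
  have := LinearMap.finrank_range_add_finrank_ker (ad k L v)
  change _ ≤ finrank k (center k L).toSubmodule + _
  omega

theorem lie_eq_zero_of_mem_span_s15 {s : Set L} (hs : ∀ a ∈ s, ∀ b ∈ s, ⁅a, b⁆ = 0) {x y : L}
    (hx : x ∈ Submodule.span k s) (hy : y ∈ Submodule.span k s) : ⁅x, y⁆ = 0 := by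
  induction hx, hy using Submodule.span_induction₂ with
  | mem_mem a b ha hb => exact hs a ha b hb
  | zero_left => exact zero_lie _
  | zero_right => exact lie_zero _
  | add_left _ _ _ _ _ _ h₁ h₂ => rw [add_lie, h₁, h₂, add_zero]
  | add_right _ _ _ _ _ _ h₁ h₂ => rw [lie_add, h₁, h₂, add_zero]
  | smul_left _ _ _ _ _ h => rw [smul_lie, h, smul_zero]
  | smul_right _ _ _ _ _ h => rw [lie_smul, h, smul_zero]

theorem lie_eq_zero_of_mem_center_sup {W : Submodule k L} (hW : ∀ a ∈ W, ∀ b ∈ W, ⁅a, b⁆ = 0)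
    {x y : L} (hx : x ∈ (center k L).toSubmodule ⊔ W) (hy : y ∈ (center k L).toSubmodule ⊔ W) :
    ⁅x, y⁆ = 0 := by
  obtain ⟨z, hz, a, ha, rfl⟩ := Submodule.mem_sup.mp hx
  obtain ⟨z', hz', b, hb, rfl⟩ := Submodule.mem_sup.mp hy
  have hzy : ⁅z, z' + b⁆ = 0 := by rw [← lie_skew, hz (z' + b), neg_zero]
  rw [add_lie, hzy, lie_add, hz' a, hW a ha b hb, add_zero, zero_add]

theorem exists_isLieAbelian_of_lie_eq_zero (W : Submodule k L)
    (hW : ∀ a ∈ W, ∀ b ∈ W, ⁅a, b⁆ = 0) :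
    ∃ H : LieSubalgebra k L, IsLieAbelian H ∧ finrank k H = finrank k W :=
  ⟨{ W with lie_mem' := fun hx hy ↦ (hW _ hx _ hy).symm ▸ W.zero_mem },
    ⟨fun x y ↦ Subtype.ext (hW x x.2 y y.2)⟩, rfl⟩

/-- For `v` in the second center but not the center, `ker (ad v)` has codimension at most
`dim Z(L)`, so it contains some `u` independent of `Z(L) + k v`; then `Z(L) + k v + k u` is
abelian. -/
theorem exists_isLieAbelian_finrank_eq_finrank_center_add_two [Module.Finite k L]
    [LieRing.IsNilpotent L] (h : 2 * finrank k (center k L) + 1 < finrank k L) :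
    ∃ H : LieSubalgebra k L, IsLieAbelian H ∧ finrank k H = finrank k (center k L) + 2 := by
  set Z := (center k L).toSubmodule
  have hZ : finrank k Z = finrank k (center k L) := rfl
  have hZ_ne_top : center k L ≠ ⊤ := by
    intro hZ_top
    rw [hZ_top] at h
    have : finrank k (⊤ : LieSubmodule k L L) = finrank k L := finrank_top k L
    omega
  obtain ⟨v, hv_norm, hvZ⟩ :=
    SetLike.exists_of_lt (LieSubmodule.lt_normalizer_of_ne_top hZ_ne_top)
  have hker := finrank_le_finrank_center_add_finrank_ker_ad hv_norm
  have hZv : finrank k ↥(Z ⊔ k ∙ v) = finrank k Z + 1 := Submodule.finrank_sup_span_singleton hvZ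
  obtain ⟨u, hu_ker, huZv⟩ : ∃ u ∈ LinearMap.ker (ad k L v), u ∉ Z ⊔ k ∙ v :=
    SetLike.not_le_iff_exists.mp fun hle ↦ by have := Submodule.finrank_mono hle; omega
  have hvu : ⁅v, u⁆ = 0 := hu_ker
  have huv : ⁅u, v⁆ = 0 := by rw [← lie_skew, hvu, neg_zero]
  have hspan : ∀ a ∈ ({v, u} : Set L), ∀ b ∈ ({v, u} : Set L), ⁅a, b⁆ = 0 := by
    simp only [Set.mem_insert_iff, Set.mem_singleton_iff]
    rintro a (rfl | rfl) b (rfl | rfl) <;> simp [hvu, huv]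
  have hW : Z ⊔ k ∙ v ⊔ k ∙ u = Z ⊔ Submodule.span k {v, u} := by
    rw [sup_assoc, Submodule.span_insert]
  obtain ⟨H, hH, hHW⟩ := exists_isLieAbelian_of_lie_eq_zero (Z ⊔ k ∙ v ⊔ k ∙ u) fun a ha b hb ↦
    lie_eq_zero_of_mem_center_sup (fun _ hx _ hy ↦ lie_eq_zero_of_mem_span_s15 hspan hx hy)
      (hW ▸ ha) (hW ▸ hb)
  refine ⟨H, hH, ?_⟩
  rw [hHW, Submodule.finrank_sup_span_singleton huZv, hZv, hZ]

theorem le_maxAbelianDim [Module.Finite k L] {H : LieSubalgebra k L} (hH : IsLieAbelian H) :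
    finrank k H ≤ maxAbelianDim k L :=
  le_csSup ⟨finrank k L, by rintro _ ⟨K, -, rfl⟩; exact Submodule.finrank_le K.toSubmodule⟩
    ⟨H, hH, rfl⟩

end

theorem dim7_nilpotent_abelian_subalgebra_general (k : Type*) [Field k]
    (L : Type*) [LieRing L] [LieAlgebra k L]
    [LieRing.IsNilpotent L]
    (hdim : finrank k L = 7) (hindex : lieIndex k L = 3)
    (hcenter : finrank k (LieAlgebra.center k L) = 2) :
    (∃ H : LieSubalgebra k L, IsLieAbelian H ∧ finrank k H = 4) ∧
    4 ≤ maxAbelianDim k L ∧ magic k L - 1 = 4 := by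
  have : Module.Finite k L := Module.finite_of_finrank_eq_succ hdim
  obtain ⟨H, hH, hH_dim⟩ :=
    exists_isLieAbelian_finrank_eq_finrank_center_add_two (k := k) (L := L) (by omega)
  have hH4 : finrank k H = 4 := by rw [hH_dim, hcenter]
  exact ⟨⟨H, hH, hH4⟩, hH4 ▸ le_maxAbelianDim hH, by simp [magic, hdim, hindex]⟩

/-- a 7-dimensional nilpotent Lie algebra with index 3 and 2-dimensional
center possesses a 4-dimensional abelian subalgebra, so `α(L) ≥ 4 = c(L) - 1`. -/
theorem dim7_nilpotent_abelian_subalgebra (k : Type*) [Field k] [IsAlgClosed k] [CharZero k]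
    (L : Type*) [LieRing L] [LieAlgebra k L] [Module.Finite k L]
    [LieRing.IsNilpotent L]
    (hdim : finrank k L = 7) (hindex : lieIndex k L = 3)
    (hcenter : finrank k (LieAlgebra.center k L) = 2) :
    (∃ H : LieSubalgebra k L, IsLieAbelian H ∧ finrank k H = 4) ∧
    4 ≤ maxAbelianDim k L ∧ magic k L - 1 = 4 :=
  dim7_nilpotent_abelian_subalgebra_general k L hdim hindex hcenter
end

section
/- Let L be the 3-dimensional Lie algebra with basis x, y, z and nonzero brackets [x,y] = y, [x,z] = z. Then i(L) = 1 and the Poisson center Y(L) = S(L)^L equals the scalars k. -/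
/-! In `L`, the derived algebra `[L, L] = span {y, z}` is abelian and `ad x` acts on it as the
identity, so `[w, u] = -x*(u) w` for `w ∈ [L, L]`. Hence every `w ∈ [L, L] ∩ ker ξ` stabilizes `ξ`,
and this intersection is at least a line; for `ξ = y*` the stabilizer is exactly `k z`, so
`i(L) = 1`.

For the Poisson center, `{f, y} = y ∂ₓf` and `{f, x} = -(y ∂_y + z ∂_z) f`, so a central `f` is
killed by the Euler operator `Σ Xᵢ ∂ᵢ`, which multiplies each monomial by its degree; in
characteristic zero only the constants survive. -/

open Module

open MvPolynomial in
/-- The Poisson bracket on `S(L) = k[x,y,z]` for the Lie algebra with brackets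
`[x,y] = y`, `[x,z] = z`, `[y,z] = 0` (here `x = X 0`, `y = X 1`, `z = X 2`). -/
noncomputable def poissonBracket318 (k : Type*) [Field k]
    (f g : MvPolynomial (Fin 3) k) : MvPolynomial (Fin 3) k :=
  X 1 * (pderiv 0 f * pderiv 1 g - pderiv 1 f * pderiv 0 g) +
  X 2 * (pderiv 0 f * pderiv 2 g - pderiv 2 f * pderiv 0 g)

theorem lieIndex_eq_of_forall_le {k L : Type*} [Field k] [LieRing L] [LieAlgebra k L] {n : ℕ}
    (hle : ∀ ξ : Module.Dual k L, n ≤ finrank k (lieStab k L ξ))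
    {ξ₀ : Module.Dual k L} (hξ₀ : finrank k (lieStab k L ξ₀) ≤ n) : lieIndex k L = n :=
  le_antisymm ((Nat.sInf_le (Set.mem_range_self ξ₀)).trans hξ₀)
    (le_csInf (Set.range_nonempty _) (by rintro _ ⟨ξ, rfl⟩; exact hle ξ))

section

variable {k L : Type*} [Field k] [LieRing L] [LieAlgebra k L] {b : Basis (Fin 3) k L}

theorem lie_eq_neg_coord_smul_of_mem_span (hxy : ⁅b 0, b 1⁆ = b 1) (hxz : ⁅b 0, b 2⁆ = b 2)
    (hyz : ⁅b 1, b 2⁆ = 0) {w : L} (hw : w ∈ Submodule.span k {b 1, b 2}) (u : L) :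
    ⁅w, u⁆ = -(b.coord 0 u • w) := by
  obtain ⟨s, t, rfl⟩ := Submodule.mem_span_pair.mp hw
  have had : LieAlgebra.ad k L (s • b 1 + t • b 2) = -(b.coord 0).smulRight (s • b 1 + t • b 2) := by
    refine b.ext fun i => ?_
    fin_cases i <;> simp [LieAlgebra.ad_apply, ← lie_skew (b 1) (b 0), ← lie_skew (b 2) (b 0),
      ← lie_skew (b 2) (b 1), hxy, hxz, hyz, Basis.coord_apply, add_comm]
  simpa [LieAlgebra.ad_apply] using LinearMap.congr_fun had u

theorem mem_lieStab_of_mem_span (hxy : ⁅b 0, b 1⁆ = b 1) (hxz : ⁅b 0, b 2⁆ = b 2)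
    (hyz : ⁅b 1, b 2⁆ = 0) {ξ : Module.Dual k L} {w : L} (hw : w ∈ Submodule.span k {b 1, b 2})
    (hξw : ξ w = 0) : w ∈ lieStab k L ξ := fun u => by
  rw [lie_eq_neg_coord_smul_of_mem_span hxy hxz hyz hw, map_neg, map_smul, hξw, smul_zero, neg_zero]

theorem one_le_finrank_lieStab (hxy : ⁅b 0, b 1⁆ = b 1) (hxz : ⁅b 0, b 2⁆ = b 2)
    (hyz : ⁅b 1, b 2⁆ = 0) (ξ : Module.Dual k L) : 1 ≤ finrank k (lieStab k L ξ) := by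
  have := Module.Finite.of_basis b
  set D := Submodule.span k {b 1, b 2}
  have hD : finrank k D = 2 := by
    have := finrank_span_eq_card (b.linearIndependent.comp ![1, 2] (by decide))
    rwa [Set.range_comp, Matrix.range_cons, Matrix.range_cons, Matrix.range_empty, Set.union_empty,
      Set.singleton_union, Set.image_pair, Fintype.card_fin] at this
  obtain ⟨⟨w, hwD⟩, hw, hw0⟩ := Submodule.exists_mem_ne_zero_of_ne_bot
    (LinearMap.ker_ne_bot_of_finrank_lt (f := ξ.domRestrict D) (by rw [hD, finrank_self]; norm_num))
  rw [Submodule.one_le_finrank_iff]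
  exact Submodule.ne_bot_iff _ |>.mpr ⟨w, mem_lieStab_of_mem_span hxy hxz hyz hwD hw, by simpa using hw0⟩

theorem lieStab_coord_one_le (hxy : ⁅b 0, b 1⁆ = b 1) (hxz : ⁅b 0, b 2⁆ = b 2)
    (hyz : ⁅b 1, b 2⁆ = 0) : lieStab k L (b.coord 1) ≤ Submodule.span k {b 2} := by
  intro x hx
  set c := b.repr x
  have hx_eq : x = c 0 • b 0 + c 1 • b 1 + c 2 • b 2 :=
    ((Fin.sum_univ_three fun i => c i • b i).symm.trans (b.sum_repr x)).symm
  have hc0 : c 0 = 0 := by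
    simpa [← lie_skew (b 2) (b 1), hxy, hyz] using (hx_eq ▸ hx (b 1) :)
  have hc1 : c 1 = 0 := by
    simpa [← lie_skew (b 1) (b 0), ← lie_skew (b 2) (b 0), hxy, hxz] using (hx_eq ▸ hx (b 0) :)
  rw [Submodule.mem_span_singleton]
  exact ⟨c 2, by rw [hx_eq, hc0, hc1, zero_smul, zero_smul, zero_add, zero_add]⟩

theorem finrank_lieStab_coord_one_le (hxy : ⁅b 0, b 1⁆ = b 1) (hxz : ⁅b 0, b 2⁆ = b 2)
    (hyz : ⁅b 1, b 2⁆ = 0) : finrank k (lieStab k L (b.coord 1)) ≤ 1 :=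
  (Submodule.finrank_mono (lieStab_coord_one_le hxy hxz hyz)).trans_eq
    (finrank_span_singleton (b.ne_zero 2))

end

namespace MvPolynomial

variable {σ R : Type*} [Fintype σ] [CommSemiring R]

theorem coeff_sum_X_mul_pderiv (f : MvPolynomial σ R) (m : σ →₀ ℕ) :
    coeff m (∑ i, X i * pderiv i f) = m.degree • coeff m f := by
  induction f using MvPolynomial.induction_on' with
  | monomial s a =>
    simp only [X_mul_pderiv_monomial, ← Finset.sum_smul, ← Finsupp.degree_eq_sum, coeff_smul]
    by_cases h : s = m
    · rw [h]
    · classical rw [coeff_monomial, if_neg h, smul_zero, smul_zero]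
  | add p q hp hq =>
    simp only [map_add, mul_add, Finset.sum_add_distrib, coeff_add, hp, hq, smul_add]

theorem eq_C_of_sum_X_mul_pderiv_eq_zero [IsAddTorsionFree R] {f : MvPolynomial σ R}
    (hf : ∑ i, X i * pderiv i f = 0) : f = C (coeff 0 f) := by
  ext m
  by_cases hm : m = 0
  · rw [hm, coeff_zero_C]
  · rw [coeff_C_of_ne_zero hm]
    have := coeff_sum_X_mul_pderiv f m
    rw [hf, coeff_zero, eq_comm, smul_eq_zero] at this
    exact this.resolve_left (by rwa [Finsupp.degree_eq_zero_iff])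

end MvPolynomial

open MvPolynomial in
theorem sum_X_mul_pderiv_eq_zero_of_poissonBracket318_eq_zero {k : Type*} [Field k]
    {f : MvPolynomial (Fin 3) k} (hf : ∀ g, poissonBracket318 k f g = 0) :
    ∑ i, X i * pderiv i f = 0 := by
  have h0 : pderiv 0 f = 0 := by
    simpa [poissonBracket318, pderiv_X] using hf (X 1)
  have h12 : X 1 * pderiv 1 f + X 2 * pderiv 2 f = 0 := by
    have := hf (X 0)
    simp only [poissonBracket318, pderiv_X_self, pderiv_X_of_ne (by decide : (0 : Fin 3) ≠ 1),
      pderiv_X_of_ne (by decide : (0 : Fin 3) ≠ 2), mul_one, mul_zero, zero_sub, mul_neg] at this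
    linear_combination -this
  rw [Fin.sum_univ_three, h0, mul_zero, zero_add, h12]

theorem example36_index_and_poisson_center_general (k : Type*) [Field k] [CharZero k]
    (L : Type*) [LieRing L] [LieAlgebra k L]
    (b : Basis (Fin 3) k L)
    (hxy : ⁅b 0, b 1⁆ = b 1) (hxz : ⁅b 0, b 2⁆ = b 2) (hyz : ⁅b 1, b 2⁆ = 0) :
    lieIndex k L = 1 ∧
    ∀ f : MvPolynomial (Fin 3) k,
      (∀ g : MvPolynomial (Fin 3) k, poissonBracket318 k f g = 0) →
      ∃ c : k, f = MvPolynomial.C c :=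
  ⟨lieIndex_eq_of_forall_le (one_le_finrank_lieStab hxy hxz hyz)
      (finrank_lieStab_coord_one_le hxy hxz hyz),
    fun _ hf => ⟨_, MvPolynomial.eq_C_of_sum_X_mul_pderiv_eq_zero
      (sum_X_mul_pderiv_eq_zero_of_poissonBracket318_eq_zero hf)⟩⟩

/-- for the 3-dimensional Lie algebra with `[x,y] = y`, `[x,z] = z`,
the index is 1 and the Poisson center `Y(L)` of `S(L) = k[x,y,z]` consists of the
scalars only. -/
theorem example36_index_and_poisson_center (k : Type*) [Field k] [CharZero k]
    (L : Type*) [LieRing L] [LieAlgebra k L] [Module.Finite k L]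
    (b : Basis (Fin 3) k L)
    (hxy : ⁅b 0, b 1⁆ = b 1) (hxz : ⁅b 0, b 2⁆ = b 2) (hyz : ⁅b 1, b 2⁆ = 0) :
    lieIndex k L = 1 ∧
    ∀ f : MvPolynomial (Fin 3) k,
      (∀ g : MvPolynomial (Fin 3) k, poissonBracket318 k f g = 0) →
      ∃ c : k, f = MvPolynomial.C c :=
  example36_index_and_poisson_center_general k L b hxy hxz hyz
end
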